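/- arXiv:1802.04679 — 6 statements merged into one kernel-verified Lean document; each statement's English description precedes it below -/
import Mathlib

section
/- In the algebra R = K⟨x,y⟩/(x², y³, (x+y)³), the relation y·x·y·x = x·y·x·y holds. -/
noncomputable section

open FreeAlgebra

/-- The defining relations of `R(E₆) = K⟨x,y⟩/(x², y³, (x+y)³)`. -/
inductive RRel (K : Type*) [Field K] :
    FreeAlgebra K (Fin 2) → FreeAlgebra K (Fin 2) → Prop
  | xx : RRel K (ι K (0 : Fin 2) * ι K 0) 0
  | yyy : RRel K (ι K (1 : Fin 2) * ι K 1 * ι K 1) 0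
  | xy3 : RRel K ((ι K (0 : Fin 2) + ι K 1) ^ 3) 0

/-- `R(E₆) = K⟨x,y⟩/(x², y³, (x+y)³)`. -/
abbrev RE6 (K : Type*) [Field K] := RingQuot (RRel K)

/-- The image of `x` in `R(E₆)`. -/
def rx (K : Type*) [Field K] : RE6 K := RingQuot.mkAlgHom K (RRel K) (ι K 0)

/-- The image of `y` in `R(E₆)`. -/
def ry (K : Type*) [Field K] : RE6 K := RingQuot.mkAlgHom K (RRel K) (ι K 1)

variable (K : Type*) [Field K]

theorem yxyx_eq_xyxy :
    ry K * rx K * ry K * rx K = rx K * ry K * rx K * ry K := by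
  set s := rx K with hs
  set t := ry K with ht
  have hx : s * s = 0 := by
    rw [hs, rx, ← map_mul, RingQuot.mkAlgHom_rel K RRel.xx, map_zero]
  have hxy : (s + t) ^ 3 = 0 := by
    rw [hs, ht, rx, ry, ← map_add, ← map_pow, RingQuot.mkAlgHom_rel K RRel.xy3, map_zero]
  have expand : (s + t) ^ 3 = s*s*s + s*s*t + s*t*s + t*s*s + s*t*t + t*s*t + t*t*s
      + t*t*t := by noncomm_ring
  rw [expand] at hxy
  have key : s*t*s + s*t*t + t*s*t + t*t*s + t*t*t = 0 := by
    rw [show s*s*s = 0 by rw [mul_assoc, hx, mul_zero], show s*s*t = 0 by rw [hx, zero_mul],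
      show t*s*s = 0 by rw [mul_assoc, hx, mul_zero]] at hxy
    linear_combination (norm := noncomm_ring) hxy
  have hL := congrArg (fun z => s * z) key
  have hR := congrArg (fun z => z * s) key
  simp only [mul_add, add_mul, mul_zero, zero_mul] at hL hR
  -- hL : s*(s*t*s) + s*(s*t*t) + s*(t*s*t) + s*(t*t*s) + s*(t*t*t) = 0
  have hL' : s*t*s*t + s*(t*t*s) + s*(t*t*t) = 0 := by
    rw [show s*(s*t*s) = 0 by rw [show s*(s*t*s) = s*s*(t*s) by noncomm_ring, hx, zero_mul], show s*(s*t*t) = 0 by rw [show s*(s*t*t) = s*s*(t*t) by noncomm_ring, hx, zero_mul],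
      show s*(t*s*t) = s*t*s*t by noncomm_ring] at hL
    linear_combination (norm := noncomm_ring) hL
  have hR' : t*s*t*s + s*(t*t*s) + (t*t*t)*s = 0 := by
    rw [show s*t*s*s = 0 by rw [mul_assoc, hx, mul_zero], show s*t*t*s = s*(t*t*s) by noncomm_ring,
      show t*s*t*s = t*s*t*s from rfl, show t*t*s*s = 0 by rw [mul_assoc, hx, mul_zero]] at hR
    linear_combination (norm := noncomm_ring) hR
  have hy : t*t*t = 0 := by
    rw [ht, ry, ← map_mul, ← map_mul, RingQuot.mkAlgHom_rel K RRel.yyy, map_zero]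
  rw [hy, mul_zero, add_zero] at hL'
  rw [hy, zero_mul, add_zero] at hR'
  have : t*s*t*s = s*t*s*t := by linear_combination (norm := noncomm_ring) hR' - hL'
  linear_combination (norm := noncomm_ring) this
end
end

section
/- In the algebra R = K⟨x,y⟩/(x², y³, (x+y)³), the relation y·x·y·x = -x·y·y·x holds. -/
noncomputable section

open FreeAlgebra

variable (K : Type*) [Field K]

theorem yxyx_eq_neg_xyyx :
    ry K * rx K * ry K * rx K = -(rx K * ry K * ry K * rx K) := by
  have hx : rx K * rx K = 0 := by
    have := RingQuot.mkAlgHom_rel K (RRel.xx (K := K))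
    simpa [rx, map_mul] using this
  have hy : ry K * ry K * ry K = 0 := by
    have := RingQuot.mkAlgHom_rel K (RRel.yyy (K := K))
    simpa [ry, map_mul] using this
  have hxy : (rx K + ry K) ^ 3 = 0 := by
    have := RingQuot.mkAlgHom_rel K (RRel.xy3 (K := K))
    simpa [rx, ry, map_pow, map_add] using this
  set X := rx K with hX
  set Y := ry K with hY
  have hx2 : ∀ a : RE6 K, X * (X * a) = 0 := fun a => by
    rw [← mul_assoc, hx, zero_mul]
  have hy2 : ∀ a : RE6 K, Y * (Y * (Y * a)) = 0 := fun a => by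
    rw [← mul_assoc, ← mul_assoc, hy, zero_mul]
  have h0 : (X + Y) ^ 3 * X = 0 := by rw [hxy, zero_mul]
  have expand : (X + Y) ^ 3 * X =
      X*X*X*X + X*X*Y*X + X*Y*X*X + X*Y*Y*X + Y*X*X*X + Y*X*Y*X + Y*Y*X*X + Y*Y*Y*X := by
    noncomm_ring
  rw [expand] at h0
  simp only [mul_assoc, hx2, hy2, hx, hy, zero_mul, mul_zero, add_zero, zero_add] at h0 ⊢
  -- h0 should now be X*(Y*(Y*X)) + Y*(X*(Y*X)) = 0
  exact eq_neg_of_add_eq_zero_left (add_comm (X * (Y * (Y * X))) _ ▸ h0)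
end
end

section
/- In the algebra R = K⟨x,y⟩/(x², y³, (x+y)³), the relations y·y·x·y·y = -y·y·x·y·x = y·x·y·y·x = -y·x·y·x·y = x·y·y·x·y = -x·y·x·y·y all hold. -/
noncomputable section

open FreeAlgebra

lemma aux_exp {A : Type*} [Ring A] (a b : A) (ha : a*a = 0) (hb : b*b*b = 0)
    (hc : (a+b)^3 = 0) : a*b*a + a*b*b + b*a*b + b*b*a = 0 := by
  have h : (a+b)^3 = a*a*a + a*a*b + a*b*a + a*b*b + b*a*a + b*a*b + b*b*a + b*b*b := by
    noncomm_ring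
  rw [h] at hc
  have h1 : a*a*a = 0 := by rw [ha, zero_mul]
  have h2 : a*a*b = 0 := by rw [ha, zero_mul]
  have h3 : b*a*a = 0 := by rw [mul_assoc, ha, mul_zero]
  rw [h1, h2, h3, hb] at hc
  simpa using hc

lemma aux_all {A : Type*} [Ring A] (a b : A) (ha : a*a = 0) (hb : b*b*b = 0)
    (hc : (a+b)^3 = 0) :
    b*b*a*b*b = -(b*b*a*b*a) ∧ b*b*a*b*b = b*a*b*b*a ∧
    b*b*a*b*b = -(b*a*b*a*b) ∧ b*b*a*b*b = a*b*b*a*b ∧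
    b*b*a*b*b = -(a*b*a*b*b) := by
  have hE := aux_exp a b ha hb hc
  -- h1 : multiply hE on left by b*b
  have h1 : b*b*a*b*b = -(b*b*a*b*a) := by
    have h := congrArg (fun z => b*b*z) hE
    simp only [mul_add, mul_zero] at h
    rw [show b*b*(a*b*a) = b*b*a*b*a by noncomm_ring,
        show b*b*(a*b*b) = b*b*a*b*b by noncomm_ring,
        show b*b*(b*a*b) = (b*b*b)*(a*b) by noncomm_ring, hb, zero_mul,
        show b*b*(b*b*a) = (b*b*b)*(b*a) by noncomm_ring, hb, zero_mul,
        add_zero, add_zero] at h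
    exact eq_neg_of_add_eq_zero_right h
  -- h3 : b * hE * b
  have h3 : b*b*a*b*b = -(b*a*b*a*b) := by
    have h := congrArg (fun z => b*z*b) hE
    simp only [add_mul, mul_add, zero_mul, mul_zero] at h
    rw [show b*(a*b*a)*b = b*a*b*a*b by noncomm_ring,
        show b*(a*b*b)*b = (b*a)*(b*b*b) by noncomm_ring, hb, mul_zero,
        show b*(b*a*b)*b = b*b*a*b*b by noncomm_ring,
        show b*(b*b*a)*b = (b*b*b)*(a*b) by noncomm_ring, hb, zero_mul,
        add_zero, add_zero] at h
    exact eq_neg_of_add_eq_zero_right h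
  -- h5 : hE * (b*b)
  have h5 : b*b*a*b*b = -(a*b*a*b*b) := by
    have h := congrArg (fun z => z*(b*b)) hE
    simp only [add_mul, zero_mul] at h
    rw [show a*b*a*(b*b) = a*b*a*b*b by noncomm_ring,
        show a*b*b*(b*b) = (a*b)*(b*b*b) by noncomm_ring, hb, mul_zero,
        show b*a*b*(b*b) = (b*a)*(b*b*b) by noncomm_ring, hb, mul_zero,
        show b*b*a*(b*b) = b*b*a*b*b by noncomm_ring,
        add_zero, add_zero] at h
    exact eq_neg_of_add_eq_zero_right h
  -- h2 : b * hE * a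
  have h2 : b*b*a*b*b = b*a*b*b*a := by
    have h := congrArg (fun z => b*z*a) hE
    simp only [add_mul, mul_add, zero_mul, mul_zero] at h
    rw [show b*(a*b*a)*a = (b*a*b)*(a*a) by noncomm_ring, ha, mul_zero,
        show b*(a*b*b)*a = b*a*b*b*a by noncomm_ring,
        show b*(b*a*b)*a = b*b*a*b*a by noncomm_ring,
        show b*(b*b*a)*a = (b*b*b)*(a*a) by noncomm_ring, ha, mul_zero,
        zero_add, add_zero] at h
    rw [h1, eq_neg_of_add_eq_zero_left h]
  -- h4 : a * hE * b
  have h4 : b*b*a*b*b = a*b*b*a*b := by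
    have h := congrArg (fun z => a*z*b) hE
    simp only [add_mul, mul_add, zero_mul, mul_zero] at h
    rw [show a*(a*b*a)*b = (a*a)*(b*a*b) by noncomm_ring, ha, zero_mul,
        show a*(a*b*b)*b = (a*a)*(b*b*b) by noncomm_ring, ha, zero_mul,
        show a*(b*a*b)*b = a*b*a*b*b by noncomm_ring,
        show a*(b*b*a)*b = a*b*b*a*b by noncomm_ring,
        zero_add, zero_add] at h
    rw [h5, eq_neg_of_add_eq_zero_right h]
  exact ⟨h1, h2, h3, h4, h5⟩


variable (K : Type*) [Field K]

theorem length_five_monomial_relations :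
    ry K * ry K * rx K * ry K * ry K = -(ry K * ry K * rx K * ry K * rx K) ∧
    ry K * ry K * rx K * ry K * ry K = ry K * rx K * ry K * ry K * rx K ∧
    ry K * ry K * rx K * ry K * ry K = -(ry K * rx K * ry K * rx K * ry K) ∧
    ry K * ry K * rx K * ry K * ry K = rx K * ry K * ry K * rx K * ry K ∧
    ry K * ry K * rx K * ry K * ry K = -(rx K * ry K * rx K * ry K * ry K) := by
  have hx : rx K * rx K = 0 := by
    have h := RingQuot.mkAlgHom_rel K (RRel.xx (K := K))
    simpa [rx, map_mul] using h
  have hy : ry K * ry K * ry K = 0 := by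
    have h := RingQuot.mkAlgHom_rel K (RRel.yyy (K := K))
    simpa [ry, map_mul] using h
  have hc : (rx K + ry K) ^ 3 = 0 := by
    have h := RingQuot.mkAlgHom_rel K (RRel.xy3 (K := K))
    simpa [rx, ry, map_pow, map_add] using h
  exact aux_all (rx K) (ry K) hx hy hc
end
end

section
/- In the algebra R = K⟨x,y⟩/(x², y³, (x+y)³), every product of the generators x and y of length at least 6 is zero; in particular the radical of R satisfies (rad R)⁶ = 0. -/
noncomputable section

open FreeAlgebra

variable (K : Type*) [Field K]

/-- The radical of `R(E₆)`: the two-sided ideal generated by `x` and `y`,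
viewed as a `K`-submodule. -/
def radRE6 : Submodule K (RE6 K) :=
  Submodule.span K {z | ∃ p q g, (g = rx K ∨ g = ry K) ∧ z = p * g * q}

/-! ### Auxiliary lemmas -/

local notation "X" => rx K
local notation "Y" => ry K

lemma hxx : X * X = 0 := by
  have h := RingQuot.mkAlgHom_rel K (RRel.xx (K := K))
  simpa [rx, map_mul] using h

lemma hyyy : Y * Y * Y = 0 := by
  have h := RingQuot.mkAlgHom_rel K (RRel.yyy (K := K))
  simpa [ry, map_mul] using h

lemma h3 : (X + Y) ^ 3 = 0 := by
  have h := RingQuot.mkAlgHom_rel K (RRel.xy3 (K := K))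
  simpa [rx, ry, map_pow, map_add] using h

lemma hxxt (t : RE6 K) : X * (X * t) = 0 := by
  rw [← mul_assoc, hxx, zero_mul]

lemma hyy' : Y * (Y * Y) = 0 := by rw [← mul_assoc, hyyy]

lemma hyyt (t : RE6 K) : Y * (Y * (Y * t)) = 0 := by
  rw [← mul_assoc, ← mul_assoc, hyyy, zero_mul]

lemma h4 : X*(Y*X) + (X*(Y*Y) + (Y*(X*Y) + Y*(Y*X))) = 0 := by
  have h := h3 K
  rw [pow_succ, pow_succ, pow_one] at h
  simp only [mul_add, add_mul, mul_assoc, hxxt, hxx, hyy', hyyt, zero_add, add_zero,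
    mul_zero, zero_mul] at h
  rw [← h]
  abel

lemma rmuln (a b : RE6 K) : a * -b = -(a * b) := mul_neg a b
lemma rnmul (a b : RE6 K) : -a * b = -(a * b) := neg_mul a b
lemma rnegz : -(0 : RE6 K) = 0 := neg_zero
lemma rnegadd (a b : RE6 K) : -(a + b) = -a + -b := neg_add a b
lemma rnegneg (a : RE6 K) : - -a = a := neg_neg a

lemma hxyx : X*(Y*X) = -(X*(Y*Y) + (Y*(X*Y) + Y*(Y*X))) :=
  add_eq_zero_iff_eq_neg.mp (h4 K)

lemma hxyxt (t : RE6 K) :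
    X*(Y*(X*t)) = -(X*(Y*(Y*t)) + (Y*(X*(Y*t)) + Y*(Y*(X*t)))) := by
  have h := congrArg (· * t) (h4 K)
  simp only [add_mul, zero_mul, mul_assoc, rnmul] at h
  exact add_eq_zero_iff_eq_neg.mp h

lemma hII : X*(Y*(Y*X)) = -(Y*(X*(Y*X))) := by
  have h := hxyxt K X
  simp only [hxx, hxxt, mul_zero, add_zero] at h
  exact add_eq_zero_iff_eq_neg.mp (neg_eq_zero.mp h.symm)

lemma hV : Y*(X*(Y*X)) = -(Y*(X*(Y*Y)) + Y*(Y*(X*Y))) := by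
  have h := congrArg (Y * ·) (hxyx K)
  simp only [rmuln, mul_add, hyyt, add_zero] at h
  exact h

lemma hC : Y*(X*(Y*Y)) + Y*(Y*(X*Y)) = X*(Y*(Y*X)) := by
  rw [hII, hV, neg_neg]

lemma hA : Y*(Y*(X*(Y*Y))) = X*(Y*(Y*(X*Y))) := by
  have h := congrArg (· * Y) (hC K)
  simp only [add_mul, mul_assoc, hyy', mul_zero, zero_add] at h
  exact h

lemma hB : Y*(Y*(X*(Y*Y))) = Y*(X*(Y*(Y*X))) := by
  have h := congrArg (Y * ·) (hC K)
  simp only [mul_add, hyyt, add_zero] at h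
  exact h

lemma s1t (t : RE6 K) : X*(Y*(Y*(X*(Y*(Y*t))))) = 0 := by
  have h := congrArg (· * (Y*t)) (hA K)
  simp only [mul_assoc, hyyt, mul_zero] at h
  exact h.symm

lemma s2t (t : RE6 K) : Y*(X*(Y*(Y*(X*(Y*t))))) = 0 := by
  have h := congrArg (· * (Y*t)) (hB K)
  simp only [mul_assoc, hyyt, mul_zero] at h
  exact h.symm

lemma s3t (t : RE6 K) : Y*(Y*(X*(Y*(Y*(X*t))))) = 0 := by
  have h := congrArg (· * (X*t)) (hB K)
  simp only [mul_assoc, hxxt, mul_zero] at h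
  exact h

lemma key6 (a b c d e f : Fin 2) (r : RE6 K) :
    (if a = 0 then X else Y) * ((if b = 0 then X else Y) * ((if c = 0 then X else Y) *
      ((if d = 0 then X else Y) * ((if e = 0 then X else Y) *
        ((if f = 0 then X else Y) * r))))) = 0 := by
  fin_cases a <;> fin_cases b <;> fin_cases c <;> fin_cases d <;> fin_cases e <;> fin_cases f <;>
    simp [hxxt, hyyt, hxyxt, s1t, s2t, s3t, mul_add, rmuln, rnmul, rnegz, rnegadd, rnegneg]

def wordProd (w : List (Fin 2)) : RE6 K :=
  (w.map (fun i => if i = 0 then rx K else ry K)).prod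

lemma wordProd_append (w₁ w₂ : List (Fin 2)) :
    wordProd K (w₁ ++ w₂) = wordProd K w₁ * wordProd K w₂ := by
  simp [wordProd]

lemma part1 : ∀ w : List (Fin 2), 6 ≤ w.length →
    (w.map (fun i => if i = 0 then rx K else ry K)).prod = 0 := by
  intro w hw
  rcases w with _ | ⟨a, _ | ⟨b, _ | ⟨c, _ | ⟨d, _ | ⟨e, _ | ⟨f, t⟩⟩⟩⟩⟩⟩ <;>
    simp only [List.length_nil, List.length_cons] at hw <;> try omega
  simp only [List.map_cons, List.prod_cons]
  exact key6 K a b c d e f _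

def Tset (n : ℕ) : Set (RE6 K) :=
  {z | ∃ w : List (Fin 2), n ≤ w.length ∧ z = wordProd K w}

lemma span_T0 : Submodule.span K (Tset K 0) = ⊤ := by
  rw [eq_top_iff]
  rintro z -
  obtain ⟨p, rfl⟩ := RingQuot.mkAlgHom_surjective K (RRel K) z
  induction p using FreeAlgebra.induction with
  | grade0 r =>
      rw [AlgHom.commutes, Algebra.algebraMap_eq_smul_one]
      exact Submodule.smul_mem _ r
        (Submodule.subset_span ⟨[], by simp, by simp [wordProd]⟩)
  | grade1 i =>
      refine Submodule.subset_span ⟨[i], by simp, ?_⟩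
      fin_cases i <;> simp [wordProd, rx, ry]
  | mul p q hp hq =>
      rw [map_mul]
      have h := Submodule.mul_mem_mul hp hq
      rw [Submodule.span_mul_span] at h
      refine Submodule.span_mono ?_ h
      rintro _ ⟨z1, ⟨w1, -, rfl⟩, z2, ⟨w2, -, rfl⟩, rfl⟩
      exact ⟨w1 ++ w2, by simp, (wordProd_append K w1 w2).symm⟩
  | add p q hp hq =>
      rw [map_add]; exact add_mem hp hq

lemma T_mul (m n : ℕ) :
    Submodule.span K (Tset K m) * Submodule.span K (Tset K n) ≤
      Submodule.span K (Tset K (m + n)) := by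
  rw [Submodule.span_mul_span]
  refine Submodule.span_mono ?_
  rintro _ ⟨z1, ⟨w1, h1, rfl⟩, z2, ⟨w2, h2, rfl⟩, rfl⟩
  exact ⟨w1 ++ w2, by simp; omega, (wordProd_append K w1 w2).symm⟩

lemma rad_le : radRE6 K ≤ Submodule.span K (Tset K 1) := by
  rw [radRE6]
  refine Submodule.span_le.mpr ?_
  rintro _ ⟨p, q, gg, hg, rfl⟩
  have hp : p ∈ Submodule.span K (Tset K 0) := (span_T0 K).symm ▸ Submodule.mem_top
  have hq : q ∈ Submodule.span K (Tset K 0) := (span_T0 K).symm ▸ Submodule.mem_top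
  have hgg : gg ∈ Submodule.span K (Tset K 1) := by
    refine Submodule.subset_span ?_
    rcases hg with rfl | rfl
    · exact ⟨[0], by simp, by simp [wordProd]⟩
    · exact ⟨[1], by simp, by simp [wordProd]⟩
  have h1 := Submodule.mul_mem_mul (Submodule.mul_mem_mul hp hgg) hq
  have h2 : (Submodule.span K (Tset K 0) * Submodule.span K (Tset K 1)) *
      Submodule.span K (Tset K 0) ≤ Submodule.span K (Tset K 1) :=
    le_trans (mul_le_mul' (T_mul K 0 1) le_rfl) (T_mul K 1 0)
  exact h2 h1

theorem length_six_products_vanish :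
    (∀ w : List (Fin 2), 6 ≤ w.length →
      (w.map (fun i => if i = 0 then rx K else ry K)).prod = 0) ∧
    radRE6 K ^ 6 = ⊥ := by
  refine ⟨part1 K, ?_⟩
  have hpow : ∀ n, radRE6 K ^ n ≤ Submodule.span K (Tset K n) := by
    intro n
    induction n with
    | zero =>
        rw [pow_zero, Submodule.one_eq_span]
        exact Submodule.span_mono (by rintro _ rfl; exact ⟨[], by simp, by simp [wordProd]⟩)
    | succ n ih =>
        rw [pow_succ]
        exact le_trans (mul_le_mul' ih (rad_le K)) (T_mul K n 1)
  have hbot : Submodule.span K (Tset K 6) ≤ ⊥ := by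
    refine Submodule.span_le.mpr ?_
    rintro _ ⟨w, hw, rfl⟩
    simp [wordProd, part1 K w hw]
  exact le_bot_iff.mp ((hpow 6).trans hbot)
end
end

section
/- In the algebra R = K⟨x,y⟩/(x², y³, (x+y)³), if f lies in the square of the ideal generated by x and y, then (x + y + f)³ = (x + y + g)³, where g is the component of f of degree at most 3 in the monomials xy, yx, yy, xyx, xyy, yxy (i.e. terms of f of degree ≥ 4 do not affect (x+y+f)³). -/
noncomputable section

open FreeAlgebra

/-- Auxiliary: in any `K`-algebra, if `x*x = 0`, `y*y*y = 0` and `(x+y)^3 = 0`, then the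
degree-`≥ 4` part of `f` does not affect `(x + y + f)^3`. -/
lemma aux_cube {K R : Type*} [Field K] [Ring R] [Algebra K R] (x y : R)
    (hxx : x*x = 0) (hyyy : y*y*y = 0) (hcube : (x+y)^3 = 0)
    (θ₁ θ₂ θ₃ θ₄ θ₅ θ₆ θ₇ θ₈ θ₉ : K) :
    (x + y + (θ₁ • (x*y) + θ₂ • (y*x) + θ₃ • (y*y) + θ₄ • (x*y*x)
        + θ₅ • (x*y*y) + θ₆ • (y*x*y)
        + θ₇ • (x*y*x*y) + θ₈ • (y*x*y*y) + θ₉ • (x*y*x*y*y))) ^ 3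
      = (x + y + (θ₁ • (x*y) + θ₂ • (y*x) + θ₃ • (y*y) + θ₄ • (x*y*x)
        + θ₅ • (x*y*y) + θ₆ • (y*x*y))) ^ 3 := by
  have hE : x*y*x + x*y*y + y*x*y + y*y*x = 0 := by
    have expand : (x+y)^3
        = (x*x)*x + (x*x)*y + x*y*x + x*y*y + y*(x*x) + y*x*y + y*y*x + y*y*y := by
      rw [pow_three]; noncomm_ring
    have h0 := expand.symm.trans hcube
    rw [hxx, hyyy] at h0
    simpa using h0
  have hxyx : x*y*x = -(x*y*y) - y*x*y - y*y*x := by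
    have h : x*y*x - (-(x*y*y) - y*x*y - y*y*x)
        = x*y*x + x*y*y + y*x*y + y*y*x := by abel
    rw [hE] at h
    exact sub_eq_zero.mp h
  have e1 : x*y*x*y + x*y*y*x = 0 := by
    have h : x*y*x*y + x*y*y*x
        = x*(x*y*x + x*y*y + y*x*y + y*y*x) - (x*x)*(y*x) - (x*x)*(y*y) := by
      noncomm_ring
    rw [h, hE, hxx]; noncomm_ring
  have e3 : x*y*x*y + y*x*y*y + y*y*x*y = 0 := by
    have h : x*y*x*y + y*x*y*y + y*y*x*y
        = (x*y*x + x*y*y + y*x*y + y*y*x)*y - x*(y*y*y) := by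
      noncomm_ring
    rw [h, hE, hyyy]; noncomm_ring
  have hR4 : x*y*y*x = y*x*y*y + y*y*x*y := by
    have h : x*y*y*x - (y*x*y*y + y*y*x*y)
        = (x*y*x*y + x*y*y*x) - (x*y*x*y + y*x*y*y + y*y*x*y) := by abel
    rw [e1, e3] at h
    simpa [sub_eq_zero] using h
  have R1 : ∀ t : R, x*(x*t) = 0 := fun t => by rw [← mul_assoc, hxx, zero_mul]
  have R2 : ∀ t : R, y*(y*(y*t)) = 0 := fun t => by
    rw [← mul_assoc, ← mul_assoc, hyyy, zero_mul]
  have R2' : y*(y*y) = 0 := by rw [← mul_assoc, hyyy]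
  have R3 : ∀ t : R, x*(y*(x*t)) = -(x*(y*(y*t))) - y*(x*(y*t)) - y*(y*(x*t)) := by
    intro t
    have h : x*(y*(x*t)) = (x*y*x)*t := by noncomm_ring
    rw [h, hxyx]; noncomm_ring
  have R3' : x*(y*x) = -(x*(y*y)) - y*(x*y) - y*(y*x) := by
    have h : x*(y*x) = x*y*x := by noncomm_ring
    rw [h, hxyx]; noncomm_ring
  have R4 : ∀ t : R, x*(y*(y*(x*t))) = y*(x*(y*(y*t))) + y*(y*(x*(y*t))) := by
    intro t
    have h : x*(y*(y*(x*t))) = (x*y*y*x)*t := by noncomm_ring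
    rw [h, hR4]; noncomm_ring
  have R4' : x*(y*(y*x)) = y*(x*(y*y)) + y*(y*(x*y)) := by
    have h : x*(y*(y*x)) = x*y*y*x := by noncomm_ring
    rw [h, hR4]; noncomm_ring
  rw [pow_three, pow_three]
  simp only [mul_add, add_mul, sub_mul, mul_sub, neg_mul, mul_neg,
    smul_mul_assoc, mul_smul_comm, smul_smul, smul_add, smul_sub, smul_neg,
    smul_zero, mul_zero, zero_mul, add_zero, zero_add, neg_zero, sub_zero,
    zero_sub, neg_neg, mul_assoc,
    hxx, R1, R2, R2', R3, R3', R4, R4']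

variable (K : Type*) [Field K]

theorem cube_ignores_high_degree (θ₁ θ₂ θ₃ θ₄ θ₅ θ₆ θ₇ θ₈ θ₉ : K) :
    letI x := rx K; letI y := ry K
    letI g := θ₁ • (x*y) + θ₂ • (y*x) + θ₃ • (y*y) + θ₄ • (x*y*x)
        + θ₅ • (x*y*y) + θ₆ • (y*x*y)
    letI f := g + θ₇ • (x*y*x*y) + θ₈ • (y*x*y*y) + θ₉ • (x*y*x*y*y)
    (x + y + f) ^ 3 = (x + y + g) ^ 3 := by
  have hxx : rx K * rx K = 0 := by
    have h := RingQuot.mkAlgHom_rel K (RRel.xx (K := K))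
    rw [map_mul, map_zero] at h
    exact h
  have hyyy : ry K * ry K * ry K = 0 := by
    have h := RingQuot.mkAlgHom_rel K (RRel.yyy (K := K))
    rw [map_mul, map_mul, map_zero] at h
    exact h
  have hcube : (rx K + ry K) ^ 3 = 0 := by
    have h := RingQuot.mkAlgHom_rel K (RRel.xy3 (K := K))
    rw [map_pow, map_add, map_zero] at h
    exact h
  exact aux_cube (rx K) (ry K) hxx hyyy hcube θ₁ θ₂ θ₃ θ₄ θ₅ θ₆ θ₇ θ₈ θ₉
end
end

section
/- Let f = θ₁xy + θ₂yx + θ₃yy + θ₄xyx + θ₅xyy + θ₆yxy + θ₇xyxy + θ₈yxyy + θ₉xyxyy in R = K⟨x,y⟩/(x², y³, (x+y)³). Then (x + y + f)³ = 0 if and only if θ₂ = 2θ₃ − θ₁ and θ₆ = 2θ₅ − 3θ₄ − 3(θ₃ − θ₁)². -/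
noncomputable section

open FreeAlgebra

section AbstractNF

variable {K A : Type*} [Field K] [Ring A] [Module K A] [SMulCommClass K A A]
  [IsScalarTower K A A]
variable (a b : A)
variable (ha : a * a = 0) (hb : b * (b * b) = 0) (hs : (a + b) ^ 3 = 0)
include ha hb hs

lemma r3 : b * (b * a) = -(a * (b * a)) - a * (b * b) - b * (a * b) := by
  have h2 := hs
  simp only [pow_succ, pow_zero, one_mul, mul_add, add_mul, mul_assoc] at h2
  simp only [ha, ← mul_assoc, ha, zero_mul, mul_zero, add_zero, zero_add] at h2
  simp only [mul_assoc] at h2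
  simp only [hb, mul_zero, add_zero, zero_add] at h2
  linear_combination (norm := abel) h2

omit hb hs in
lemma r1 (t : A) : a * (a * t) = 0 := by rw [← mul_assoc, ha, zero_mul]

omit ha hs in
lemma r2' (t : A) : b * (b * (b * t)) = 0 := by
  rw [← mul_assoc, ← mul_assoc, mul_assoc b b b, hb, zero_mul]

lemma r3' (t : A) : b * (b * (a * t)) =
    -(a * (b * (a * t))) - a * (b * (b * t)) - b * (a * (b * t)) := by
  have := congrArg (· * t) (r3 a b ha hb hs)
  simp only [mul_assoc, sub_mul, neg_mul, add_mul] at this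
  exact this

lemma r4 : b * (a * (b * a)) = a * (b * (a * b)) := by
  have e1 : b * (b * (b * a)) = 0 := by
    rw [show b * (b * (b * a)) = b * (b * b) * a from by rw [mul_assoc, mul_assoc], hb,
      zero_mul]
  rw [r3 a b ha hb hs] at e1
  simp only [mul_sub, mul_neg, r3' a b ha hb hs, hb, mul_zero, sub_zero] at e1
  linear_combination (norm := abel) -e1

lemma r4' (t : A) : b * (a * (b * (a * t))) = a * (b * (a * (b * t))) := by
  have := congrArg (· * t) (r4 a b ha hb hs)
  simp only [mul_assoc] at this
  exact this

set_option maxHeartbeats 2000000 in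
lemma nf (θ₁ θ₂ θ₃ θ₄ θ₅ θ₆ θ₇ θ₈ θ₉ : K) :
    (a + b + (θ₁ • (a*b) + θ₂ • (b*a) + θ₃ • (b*b) + θ₄ • (a*b*a)
        + θ₅ • (a*b*b) + θ₆ • (b*a*b) + θ₇ • (a*b*a*b) + θ₈ • (b*a*b*b)
        + θ₉ • (a*b*a*b*b))) ^ 3
      = (θ₁ + θ₂ - 2*θ₃) • (a*(b*(a*b)))
        + (θ₆ - 2*θ₅ + 3*θ₄ + θ₁^2 - θ₁*θ₂ + θ₂^2 - θ₃^2) • (a*(b*(a*(b*b)))) := by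
  simp only [pow_succ, pow_zero, one_mul, mul_add, add_mul, smul_mul_assoc,
    mul_smul_comm, smul_smul, mul_assoc, smul_add, smul_neg, smul_sub,
    mul_neg, mul_sub, neg_mul, sub_mul, neg_neg, neg_add_rev,
    ha, hb, r1 a ha, r2' b hb, r3 a b ha hb hs, r3' a b ha hb hs,
    r4 a b ha hb hs, r4' a b ha hb hs,
    mul_zero, zero_mul, smul_zero, zero_smul, add_zero, zero_add, neg_zero, sub_zero,
    zero_sub]
  match_scalars <;> ring

end AbstractNF

/-- `x` in the left regular representation of `R(E₆)`. -/
def Xm : Matrix (Fin 12) (Fin 12) ℤ :=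
  !![0, 0, 0, 0, 0, 0, 0, 0, 0, 0, 0, 0;
    1, 0, 0, 0, 0, 0, 0, 0, 0, 0, 0, 0;
    0, 0, 0, 0, 0, 0, 0, 0, 0, 0, 0, 0;
    0, 0, 1, 0, 0, 0, 0, 0, 0, 0, 0, 0;
    0, 0, 0, 0, 0, 0, 0, 0, 0, 0, 0, 0;
    0, 0, 0, 0, 0, 0, 0, 0, 0, 0, 0, 0;
    0, 0, 0, 0, 1, 0, 0, 0, 0, 0, 0, 0;
    0, 0, 0, 0, 0, 1, 0, 0, 0, 0, 0, 0;
    0, 0, 0, 0, 0, 0, 0, 0, 0, 0, 0, 0;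
    0, 0, 0, 0, 0, 0, 0, 0, 1, 0, 0, 0;
    0, 0, 0, 0, 0, 0, 0, 0, 0, 0, 0, 0;
    0, 0, 0, 0, 0, 0, 0, 0, 0, 0, 1, 0]

/-- `y` in the left regular representation of `R(E₆)`. -/
def Ym : Matrix (Fin 12) (Fin 12) ℤ :=
  !![0, 0, 0, 0, 0, 0, 0, 0, 0, 0, 0, 0;
    0, 0, 0, 0, 0, 0, 0, 0, 0, 0, 0, 0;
    1, 0, 0, 0, 0, 0, 0, 0, 0, 0, 0, 0;
    0, 0, 0, 0, 0, 0, 0, 0, 0, 0, 0, 0;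
    0, 1, 0, 0, 0, 0, 0, 0, 0, 0, 0, 0;
    0, 0, 1, 0, 0, 0, 0, 0, 0, 0, 0, 0;
    0, 0, 0, 0, -1, 0, 0, 0, 0, 0, 0, 0;
    0, 0, 0, 0, -1, 0, 0, 0, 0, 0, 0, 0;
    0, 0, 0, 1, -1, 0, 0, 0, 0, 0, 0, 0;
    0, 0, 0, 0, 0, 0, 1, 0, -1, 0, 0, 0;
    0, 0, 0, 0, 0, 0, 0, 1, -1, 0, 0, 0;
    0, 0, 0, 0, 0, 0, 0, 0, 0, 1, -1, 0]

variable (K : Type*) [Field K]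

/-- Entrywise `Int.cast` as a ring hom on 12×12 matrices. -/
def castm : Matrix (Fin 12) (Fin 12) ℤ →+* Matrix (Fin 12) (Fin 12) K :=
  (Int.castRingHom K).mapMatrix

/-- The regular representation of `R(E₆)`. -/
def rep : RE6 K →ₐ[K] Matrix (Fin 12) (Fin 12) K :=
  RingQuot.liftAlgHom K ⟨FreeAlgebra.lift K ![castm K Xm, castm K Ym], by
    rintro a b ⟨⟩ <;>
      simp only [map_mul, map_add, map_pow, map_zero, FreeAlgebra.lift_ι_apply,
        Matrix.cons_val_zero, Matrix.cons_val_one, Matrix.head_cons]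
    · rw [← map_mul, show Xm * Xm = 0 from by decide, map_zero]
    · rw [← map_mul, ← map_mul, show Ym * Ym * Ym = 0 from by decide, map_zero]
    · rw [← map_add, ← map_pow, show (Xm + Ym) ^ 3 = 0 from by decide, map_zero]⟩

lemma rep_x : rep K (rx K) = castm K Xm := by
  rw [rx, rep, RingQuot.liftAlgHom_mkAlgHom_apply]
  simp

lemma rep_y : rep K (ry K) = castm K Ym := by
  rw [ry, rep, RingQuot.liftAlgHom_mkAlgHom_apply]
  simp

lemma indep (c₁ c₂ : K)
    (h : c₁ • (rx K * (ry K * (rx K * ry K)))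
        + c₂ • (rx K * (ry K * (rx K * (ry K * ry K)))) = 0) :
    c₁ = 0 ∧ c₂ = 0 := by
  have hm := congrArg (rep K) h
  simp only [map_add, map_smul, map_mul, map_zero, rep_x, rep_y] at hm
  simp only [← map_mul] at hm
  have key : ∀ i j : Fin 12,
      c₁ * ((Xm * (Ym * (Xm * Ym))) i j : ℤ)
        + c₂ * ((Xm * (Ym * (Xm * (Ym * Ym)))) i j : ℤ) = 0 := by
    intro i j
    have := congrFun (congrFun hm i) j
    simpa [castm, Matrix.add_apply, Matrix.smul_apply, smul_eq_mul,
      RingHom.mapMatrix_apply, Matrix.map_apply] using this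
  constructor
  · have := key 9 0
    rw [show (Xm * (Ym * (Xm * Ym))) 9 0 = 1 from by decide,
      show (Xm * (Ym * (Xm * (Ym * Ym)))) 9 0 = 0 from by decide] at this
    simpa using this
  · have := key 11 0
    rw [show (Xm * (Ym * (Xm * Ym))) 11 0 = 0 from by decide,
      show (Xm * (Ym * (Xm * (Ym * Ym)))) 11 0 = 1 from by decide] at this
    simpa using this

theorem admissible_iff' [IsAlgClosed K] (θ₁ θ₂ θ₃ θ₄ θ₅ θ₆ θ₇ θ₈ θ₉ : K) :
    letI x := rx K; letI y := ry K
    letI f := θ₁ • (x*y) + θ₂ • (y*x) + θ₃ • (y*y) + θ₄ • (x*y*x)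
        + θ₅ • (x*y*y) + θ₆ • (y*x*y) + θ₇ • (x*y*x*y) + θ₈ • (y*x*y*y)
        + θ₉ • (x*y*x*y*y)
    ((x + y + f) ^ 3 = 0 ↔
      θ₂ = 2*θ₃ - θ₁ ∧ θ₆ = 2*θ₅ - 3*θ₄ - 3*(θ₃ - θ₁)^2) := by
  have ha : rx K * rx K = 0 := by
    have := RingQuot.mkAlgHom_rel K (RRel.xx (K := K))
    simpa [rx, map_mul] using this
  have hb : ry K * (ry K * ry K) = 0 := by
    have := RingQuot.mkAlgHom_rel K (RRel.yyy (K := K))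
    simpa [ry, map_mul, mul_assoc] using this
  have hs : (rx K + ry K) ^ 3 = 0 := by
    have := RingQuot.mkAlgHom_rel K (RRel.xy3 (K := K))
    simpa [rx, ry, map_pow, map_add] using this
  rw [nf (rx K) (ry K) ha hb hs θ₁ θ₂ θ₃ θ₄ θ₅ θ₆ θ₇ θ₈ θ₉]
  constructor
  · intro h
    obtain ⟨hc₁, hc₂⟩ := indep K _ _ h
    constructor
    · linear_combination hc₁
    · linear_combination hc₂ + (2*θ₁ - θ₂ - 2*θ₃) * hc₁
  · rintro ⟨h2, h6⟩
    rw [show θ₁ + θ₂ - 2*θ₃ = 0 from by rw [h2]; ring,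
      show θ₆ - 2*θ₅ + 3*θ₄ + θ₁^2 - θ₁*θ₂ + θ₂^2 - θ₃^2 = 0 from by rw [h2, h6]; ring]
    simp
end
end
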